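/- arXiv:2602.24076 — 3 statements merged into one kernel-verified Lean document; each statement's English description precedes it below -/
import Mathlib

section
/- The relative difference between disk–spherical-shell and disk–sphere potentials vanishes in the small-gap limit: lim_{g→0} (Π_{D-SS}(g) − Π_{D-S}(g))/Π_{D-SS}(g) = 0, where the sphere has radius R_SS + h/2 (the outer radius of the shell). -/
open Real Filter

/-- Disk–sphere vdW potential in perpendicular orientation, radii `RD`, `RS`,
distance `d` between centers. -/
noncomputable def diskSphere' (RD RS d : ℝ) : ℝ :=
  (π ^ 2 / (3 * RS)) *
    (1 + (RS ^ 6 + (RD ^ 2 - 3 * d ^ 2) * RS ^ 4 + 3 * (d ^ 4 - RD ^ 4) * RS ^ 2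
          - (d ^ 2 - RD ^ 2) ^ 3) /
        ((d ^ 2 - (RD + RS) ^ 2) * (d ^ 2 - (RD - RS) ^ 2)) ^ ((3:ℝ)/2))

/-- Disk–spherical-shell potential: outer sphere minus inner sphere, both at
distance `d = g + RD + (RSS + h/2)`. -/
noncomputable def diskSphericalShell' (RD RSS h g : ℝ) : ℝ :=
  diskSphere' RD (RSS + h / 2) (g + RD + (RSS + h / 2))
    - diskSphere' RD (RSS - h / 2) (g + RD + (RSS + h / 2))

/-- The relative difference between the disk–spherical-shell and the disk–sphere potentials
(sphere of outer radius `RSS + h/2`) vanishes in the small-gap limit. -/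
theorem relative_difference_shell_sphere_limit (RD RSS h : ℝ) (hRD : 0 < RD)
    (hRSS : 0 < RSS) (hh : 0 < h) (hhR : h / 2 < RSS) :
    Tendsto
      (fun g : ℝ =>
        (diskSphericalShell' RD RSS h g
            - diskSphere' RD (RSS + h / 2) (g + RD + (RSS + h / 2)))
          / diskSphericalShell' RD RSS h g)
      (nhdsWithin 0 (Set.Ioi 0)) (nhds 0) := by
  have hkey : ∀ g : ℝ,
      diskSphericalShell' RD RSS h g
        - diskSphere' RD (RSS + h / 2) (g + RD + (RSS + h / 2))
      = -(diskSphere' RD (RSS - h / 2) (g + RD + (RSS + h / 2))) := by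
    intro g; unfold diskSphericalShell'; ring
  set b : ℝ := RSS + h / 2 with hbdef
  set bi : ℝ := RSS - h / 2 with hbidef
  have hbpos : 0 < b := by positivity
  have hbipos : 0 < bi := by simp [hbidef]; linarith
  -- continuity of the inner-sphere potential at g = 0
  have hIcont : Tendsto (fun g : ℝ => diskSphere' RD bi (g + RD + b)) (nhdsWithin 0 (Set.Ioi 0))
      (nhds (diskSphere' RD bi (0 + RD + b))) := by
    have hc : ContinuousAt (fun g : ℝ => diskSphere' RD bi (g + RD + b)) 0 := by
      unfold diskSphere'
      have hBcont : ContinuousAt (fun g : ℝ =>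
          ((g + RD + b) ^ 2 - (RD + bi) ^ 2) * ((g + RD + b) ^ 2 - (RD - bi) ^ 2)) 0 := by
        fun_prop
      have hB0 : 0 < ((0 + RD + b) ^ 2 - (RD + bi) ^ 2) * ((0 + RD + b) ^ 2 - (RD - bi) ^ 2) := by
        have h1 : 0 < (0 + RD + b) ^ 2 - (RD + bi) ^ 2 := by
          simp only [hbdef, hbidef]; nlinarith
        have h2 : 0 < (0 + RD + b) ^ 2 - (RD - bi) ^ 2 := by
          simp only [hbdef, hbidef]; nlinarith
        exact mul_pos h1 h2
      have hrp : ContinuousAt (fun g : ℝ =>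
          (((g + RD + b) ^ 2 - (RD + bi) ^ 2) * ((g + RD + b) ^ 2 - (RD - bi) ^ 2)) ^ ((3:ℝ)/2)) 0 :=
        hBcont.rpow_const (Or.inl hB0.ne')
      have hden : (((0 + RD + b) ^ 2 - (RD + bi) ^ 2) * ((0 + RD + b) ^ 2 - (RD - bi) ^ 2)) ^ ((3:ℝ)/2) ≠ 0 :=
        (Real.rpow_pos_of_pos hB0 _).ne'
      have hNcont : ContinuousAt (fun g : ℝ =>
          bi ^ 6 + (RD ^ 2 - 3 * (g + RD + b) ^ 2) * bi ^ 4
            + 3 * ((g + RD + b) ^ 4 - RD ^ 4) * bi ^ 2 - ((g + RD + b) ^ 2 - RD ^ 2) ^ 3) 0 := by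
        fun_prop
      exact (continuousAt_const.mul ((continuousAt_const.add (hNcont.div hrp hden))))
    exact hc.continuousWithinAt.tendsto
  -- the outer-sphere potential blows up
  have hO : Tendsto (fun g : ℝ => diskSphere' RD b (g + RD + b)) (nhdsWithin 0 (Set.Ioi 0)) atTop := by
    have hBtend : Tendsto (fun g : ℝ =>
        ((g + RD + b) ^ 2 - (RD + b) ^ 2) * ((g + RD + b) ^ 2 - (RD - b) ^ 2))
        (nhdsWithin 0 (Set.Ioi 0)) (nhdsWithin 0 (Set.Ioi 0)) := by
      rw [tendsto_nhdsWithin_iff]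
      constructor
      · have hc : ContinuousAt (fun g : ℝ =>
            ((g + RD + b) ^ 2 - (RD + b) ^ 2) * ((g + RD + b) ^ 2 - (RD - b) ^ 2)) 0 := by fun_prop
        have h0 : ((0 + RD + b) ^ 2 - (RD + b) ^ 2) * ((0 + RD + b) ^ 2 - (RD - b) ^ 2) = 0 := by ring
        have := hc.tendsto.mono_left (nhdsWithin_le_nhds (s := Set.Ioi (0:ℝ)))
        rwa [h0] at this
      · refine eventually_nhdsWithin_of_forall (fun g hg => ?_)
        have hg' : 0 < g := hg
        have h1 : 0 < (g + RD + b) ^ 2 - (RD + b) ^ 2 := by nlinarith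
        have h2 : 0 < (g + RD + b) ^ 2 - (RD - b) ^ 2 := by nlinarith
        exact mul_pos h1 h2
    have hrpow : Tendsto (fun x : ℝ => x ^ ((3:ℝ)/2)) (nhdsWithin 0 (Set.Ioi 0))
        (nhdsWithin 0 (Set.Ioi 0)) := by
      rw [tendsto_nhdsWithin_iff]
      constructor
      · have hc : ContinuousAt (fun x : ℝ => x ^ ((3:ℝ)/2)) 0 :=
          Real.continuousAt_rpow_const 0 _ (Or.inr (by norm_num))
        have := hc.tendsto.mono_left (nhdsWithin_le_nhds (s := Set.Ioi (0:ℝ)))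
        rwa [Real.zero_rpow (by norm_num : ((3:ℝ)/2) ≠ 0)] at this
      · exact eventually_nhdsWithin_of_forall fun x hx => Real.rpow_pos_of_pos hx _
    have hinv : Tendsto (fun g : ℝ =>
        ((((g + RD + b) ^ 2 - (RD + b) ^ 2) * ((g + RD + b) ^ 2 - (RD - b) ^ 2)) ^ ((3:ℝ)/2))⁻¹)
        (nhdsWithin 0 (Set.Ioi 0)) atTop :=
      tendsto_inv_nhdsGT_zero.comp (hrpow.comp hBtend)
    have hN0 : (0:ℝ) < b ^ 6 + (RD ^ 2 - 3 * (0 + RD + b) ^ 2) * b ^ 4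
        + 3 * ((0 + RD + b) ^ 4 - RD ^ 4) * b ^ 2 - ((0 + RD + b) ^ 2 - RD ^ 2) ^ 3 := by
      have : b ^ 6 + (RD ^ 2 - 3 * (0 + RD + b) ^ 2) * b ^ 4
          + 3 * ((0 + RD + b) ^ 4 - RD ^ 4) * b ^ 2 - ((0 + RD + b) ^ 2 - RD ^ 2) ^ 3
          = 4 * RD ^ 2 * b ^ 3 * (RD + b) := by ring
      rw [this]; positivity
    have hNcont : Tendsto (fun g : ℝ =>
        b ^ 6 + (RD ^ 2 - 3 * (g + RD + b) ^ 2) * b ^ 4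
          + 3 * ((g + RD + b) ^ 4 - RD ^ 4) * b ^ 2 - ((g + RD + b) ^ 2 - RD ^ 2) ^ 3)
        (nhdsWithin 0 (Set.Ioi 0))
        (nhds (b ^ 6 + (RD ^ 2 - 3 * (0 + RD + b) ^ 2) * b ^ 4
          + 3 * ((0 + RD + b) ^ 4 - RD ^ 4) * b ^ 2 - ((0 + RD + b) ^ 2 - RD ^ 2) ^ 3)) := by
      have hc : ContinuousAt (fun g : ℝ =>
          b ^ 6 + (RD ^ 2 - 3 * (g + RD + b) ^ 2) * b ^ 4
            + 3 * ((g + RD + b) ^ 4 - RD ^ 4) * b ^ 2 - ((g + RD + b) ^ 2 - RD ^ 2) ^ 3) 0 := by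
        fun_prop
      exact hc.tendsto.mono_left (nhdsWithin_le_nhds (s := Set.Ioi (0:ℝ)))
    have hfrac : Tendsto (fun g : ℝ =>
        (b ^ 6 + (RD ^ 2 - 3 * (g + RD + b) ^ 2) * b ^ 4
          + 3 * ((g + RD + b) ^ 4 - RD ^ 4) * b ^ 2 - ((g + RD + b) ^ 2 - RD ^ 2) ^ 3)
        / ((((g + RD + b) ^ 2 - (RD + b) ^ 2) * ((g + RD + b) ^ 2 - (RD - b) ^ 2)) ^ ((3:ℝ)/2)))
        (nhdsWithin 0 (Set.Ioi 0)) atTop := by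
      simp_rw [div_eq_mul_inv]
      exact Filter.Tendsto.pos_mul_atTop hN0 hNcont hinv
    have h1 : Tendsto (fun g : ℝ => (1:ℝ) +
        (b ^ 6 + (RD ^ 2 - 3 * (g + RD + b) ^ 2) * b ^ 4
          + 3 * ((g + RD + b) ^ 4 - RD ^ 4) * b ^ 2 - ((g + RD + b) ^ 2 - RD ^ 2) ^ 3)
        / ((((g + RD + b) ^ 2 - (RD + b) ^ 2) * ((g + RD + b) ^ 2 - (RD - b) ^ 2)) ^ ((3:ℝ)/2)))
        (nhdsWithin 0 (Set.Ioi 0)) atTop :=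
      tendsto_atTop_add_const_left _ 1 hfrac
    have hcpos : (0:ℝ) < π ^ 2 / (3 * b) := by positivity
    have := Filter.Tendsto.const_mul_atTop hcpos h1
    unfold diskSphere'
    exact this
  -- the shell potential blows up
  have hD : Tendsto (fun g : ℝ => diskSphericalShell' RD RSS h g) (nhdsWithin 0 (Set.Ioi 0)) atTop := by
    unfold diskSphericalShell'
    simp_rw [sub_eq_add_neg]
    exact Filter.Tendsto.atTop_add hO hIcont.neg
  simp_rw [hkey]
  exact Filter.Tendsto.div_atTop hIcont.neg hD
end

section
/- The matrix M = (1/t_T)[T_× − 2(T×t)⊗t − (1/t_T)(T×t)⊗(T·t_I)] + a₂⊗a₃ is symmetric, where {t, a₂, a₃} is a right-handed orthonormal frame in ℝ³, T is a unit vector with t_T := 1 + T·t ≠ 0, t_I := I − t⊗t, and T_× denotes the skew matrix of T. -/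
open Matrix

/-- Symmetry of the beam tangent-operator block
`M = (1/t_T)[T_× − 2(T×t)⊗t − (1/t_T)(T×t)⊗(T·t_I)] + a₂⊗a₃`, where `{t, a₂, a₃}` is a
right-handed orthonormal frame, `T` a unit vector, `t_T = 1 + T·t ≠ 0`,
`t_I = I − t⊗t`, and `T_×` the cross-product matrix of `T`. -/
theorem beam_tangent_block_symm (t a2 a3 T : Fin 3 → ℝ)
    (ht : t ⬝ᵥ t = 1) (ha2 : a2 ⬝ᵥ a2 = 1) (ha3 : a3 ⬝ᵥ a3 = 1)
    (hta2 : t ⬝ᵥ a2 = 0) (hta3 : t ⬝ᵥ a3 = 0) (ha23 : a2 ⬝ᵥ a3 = 0)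
    (hhand : crossProduct a2 a3 = t) (hT : T ⬝ᵥ T = 1)
    (htT : 1 + T ⬝ᵥ t ≠ 0)
    (M : (Fin 3 → ℝ) → (Fin 3 → ℝ))
    (hM : ∀ v, M v =
      (1 / (1 + T ⬝ᵥ t)) •
        (crossProduct T v - (2 * (t ⬝ᵥ v)) • crossProduct T t
          - ((1 / (1 + T ⬝ᵥ t)) * ((T - (T ⬝ᵥ t) • t) ⬝ᵥ v)) • crossProduct T t)
      + (a3 ⬝ᵥ v) • a2) :
    ∀ v w : Fin 3 → ℝ, v ⬝ᵥ M w = w ⬝ᵥ M v := by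
  intro v w
  have h0 := congrFun hhand 0
  have h1 := congrFun hhand 1
  have h2 := congrFun hhand 2
  rw [hM v, hM w]
  simp only [crossProduct, dotProduct, Fin.sum_univ_three, Pi.add_apply, Pi.sub_apply,
    Pi.smul_apply, smul_eq_mul, LinearMap.mk₂_apply, Matrix.cons_val_zero, Matrix.cons_val_one,
    Matrix.head_cons, Matrix.cons_val_two, Matrix.tail_cons] at h0 h1 h2 ht hT htT ⊢
  field_simp
  linear_combination
    (((T 0*t 0+T 1*t 1+T 2*t 2) - 2*(1+(T 0*t 0+T 1*t 1+T 2*t 2))) *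
      (v 0*(T 1*w 2-T 2*w 1)+v 1*(T 2*w 0-T 0*w 2)+v 2*(T 0*w 1-T 1*w 0))) * ht
    + (v 0*(t 1*w 2-t 2*w 1)+v 1*(t 2*w 0-t 0*w 2)+v 2*(t 0*w 1-t 1*w 0)) * hT
    + ((1+(T 0*t 0+T 1*t 1+T 2*t 2))^2*(v 1*w 2-v 2*w 1)) * h0
    + ((1+(T 0*t 0+T 1*t 1+T 2*t 2))^2*(v 2*w 0-v 0*w 2)) * h1
    + ((1+(T 0*t 0+T 1*t 1+T 2*t 2))^2*(v 0*w 1-v 1*w 0)) * h2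
end

section
/- The smallest-rotation update a_α^SR = A_α − ((A_α · t)/(1 + T·t))(t + T) maps an orthonormal triad {T, A₂, A₃} to an orthonormal triad {t, a₂^SR, a₃^SR}: each a_α^SR is a unit vector orthogonal to t, and a₂^SR · a₃^SR = 0. -/
open RealInnerProductSpace

lemma norm_eq_one_of_inner_self {E : Type*} [NormedAddCommGroup E]
    [InnerProductSpace ℝ E] {a : E} (h : ⟪a, a⟫ = 1) : ‖a‖ = 1 := by
  have := real_inner_self_eq_norm_sq a
  nlinarith [norm_nonneg a]

/-- The smallest-rotation update `a_α^SR = A_α − ((A_α·t)/(1 + T·t))(t + T)` maps the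
orthonormal triad `{T, A₂, A₃}` to an orthonormal triad `{t, a₂^SR, a₃^SR}`: each `a_α^SR`
is a unit vector orthogonal to `t`, and `a₂^SR · a₃^SR = 0`. -/
theorem smallest_rotation_orthonormal (T A2 A3 t : EuclideanSpace ℝ (Fin 3))
    (hT : ‖T‖ = 1) (hA2 : ‖A2‖ = 1) (hA3 : ‖A3‖ = 1)
    (hTA2 : ⟪T, A2⟫ = 0) (hTA3 : ⟪T, A3⟫ = 0) (hA23 : ⟪A2, A3⟫ = 0)
    (ht : ‖t‖ = 1) (htT : 1 + ⟪T, t⟫ ≠ 0)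
    (a2 a3 : EuclideanSpace ℝ (Fin 3))
    (ha2 : a2 = A2 - (⟪A2, t⟫ / (1 + ⟪T, t⟫)) • (t + T))
    (ha3 : a3 = A3 - (⟪A3, t⟫ / (1 + ⟪T, t⟫)) • (t + T)) :
    ‖a2‖ = 1 ∧ ‖a3‖ = 1 ∧ ⟪t, a2⟫ = 0 ∧ ⟪t, a3⟫ = 0 ∧ ⟪a2, a3⟫ = 0 := by
  have hTT : ⟪T, T⟫ = 1 := by
    rw [real_inner_self_eq_norm_sq, hT]; norm_num
  have hAA2 : ⟪A2, A2⟫ = 1 := by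
    rw [real_inner_self_eq_norm_sq, hA2]; norm_num
  have hAA3 : ⟪A3, A3⟫ = 1 := by
    rw [real_inner_self_eq_norm_sq, hA3]; norm_num
  have htt : ⟪t, t⟫ = 1 := by
    rw [real_inner_self_eq_norm_sq, ht]; norm_num
  have hA2T : ⟪A2, T⟫ = 0 := by rw [← real_inner_comm]; exact hTA2
  have hA3T : ⟪A3, T⟫ = 0 := by rw [← real_inner_comm]; exact hTA3
  have hA32 : ⟪A3, A2⟫ = 0 := by rw [← real_inner_comm]; exact hA23
  have htT' : ⟪t, T⟫ = ⟪T, t⟫ := real_inner_comm T t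
  have ht2 : ⟪t, A2⟫ = ⟪A2, t⟫ := real_inner_comm A2 t
  have ht3 : ⟪t, A3⟫ = ⟪A3, t⟫ := real_inner_comm A3 t
  refine ⟨?_, ?_, ?_, ?_, ?_⟩
  · apply norm_eq_one_of_inner_self
    simp only [ha2, inner_sub_left, inner_sub_right, inner_add_left, inner_add_right,
      real_inner_smul_left, real_inner_smul_right, hAA2, hA2T, ht2, htT', htt, hTT, hTA2]
    generalize h1 : (⟪T, t⟫ : ℝ) = x at htT ⊢
    generalize h2 : (⟪A2, t⟫ : ℝ) = p
    field_simp
    ring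
  · apply norm_eq_one_of_inner_self
    simp only [ha3, inner_sub_left, inner_sub_right, inner_add_left, inner_add_right,
      real_inner_smul_left, real_inner_smul_right, hAA3, hA3T, ht3, htT', htt, hTT, hTA3]
    generalize h1 : (⟪T, t⟫ : ℝ) = x at htT ⊢
    generalize h2 : (⟪A3, t⟫ : ℝ) = p
    field_simp
    ring
  · simp only [ha2, inner_sub_right, inner_add_right, real_inner_smul_right, ht2, htT', htt]
    generalize h1 : (⟪T, t⟫ : ℝ) = x at htT ⊢
    generalize h2 : (⟪A2, t⟫ : ℝ) = p
    field_simp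
    ring
  · simp only [ha3, inner_sub_right, inner_add_right, real_inner_smul_right, ht3, htT', htt]
    generalize h1 : (⟪T, t⟫ : ℝ) = x at htT ⊢
    generalize h2 : (⟪A3, t⟫ : ℝ) = p
    field_simp
    ring
  · simp only [ha2, ha3, inner_sub_left, inner_sub_right, inner_add_left, inner_add_right,
      real_inner_smul_left, real_inner_smul_right, hA23, hA2T, hA3T, ht2, ht3, htT', htt,
      hTT, hTA2, hTA3]
    generalize h1 : (⟪T, t⟫ : ℝ) = x at htT ⊢
    generalize h2 : (⟪A2, t⟫ : ℝ) = p
    generalize h3 : (⟪A3, t⟫ : ℝ) = q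
    field_simp
    ring
end
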